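/- arXiv:1711.08356 — 4 statements merged into one kernel-verified Lean document; each statement's English description precedes it below -/
import Mathlib

section
/- Let e ∈ ℝ and σ > 0, and let Φ : ℝ → ℝ be the normal uncertainty distribution Φ(x) = (1 + exp(π(e − x)/(√3 σ)))⁻¹. Then the functions x ↦ 1 − Φ(x) on (0,∞) and x ↦ Φ(x) on (−∞,0) are Lebesgue integrable, and ∫₀^{+∞} (1 − Φ(x)) dx − ∫_{−∞}^0 Φ(x) dx = e. -/
/-!
With `c = π / (√3 σ)`, `Φ x` is the logistic sigmoid of `c (x - e)` and `1 - Φ x` that of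
`c (e - x)`. The sigmoid is the derivative of the softplus `log (1 + exp t)`, which vanishes at
`-∞`, so the two tails integrate to `softplus (c e) / c` and `softplus (-c e) / c`; their difference
is `e` because `softplus t - softplus (-t) = t`.
-/

open Real Set MeasureTheory Filter Topology

namespace Real

noncomputable def softplus (x : ℝ) : ℝ := log (1 + exp x)

lemma hasDerivAt_softplus (x : ℝ) : HasDerivAt softplus (sigmoid x) x := by
  refine (((hasDerivAt_exp x).const_add 1).log (by positivity)).congr_deriv ?_
  rw [sigmoid_def, exp_neg]
  field_simp
  ring

lemma tendsto_softplus_atBot : Tendsto softplus atBot (𝓝 0) := by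
  have h : Tendsto (fun x => 1 + exp x) atBot (𝓝 (1 + 0)) := tendsto_exp_atBot.const_add 1
  have h' := (continuousAt_log (by norm_num)).tendsto.comp h
  rwa [add_zero, log_one] at h'

lemma softplus_sub_softplus_neg (x : ℝ) : softplus x - softplus (-x) = x := by
  have h : 1 + exp x = exp x * (1 + exp (-x)) := by
    rw [mul_add, mul_one, ← exp_add, add_neg_cancel, exp_zero, add_comm]
  rw [softplus, softplus, h, log_mul (exp_ne_zero x) (by positivity), log_exp]
  ring

end Real

section LogisticTails

variable {c : ℝ} (a b : ℝ)

lemma hasDerivAt_softplus_mul_sub (hc : 0 < c) (x : ℝ) :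
    HasDerivAt (fun y => -softplus (c * (a - y)) / c) (sigmoid (c * (a - x))) x := by
  have h : HasDerivAt (fun y => -softplus (c * (a - y)) / c)
      (-(sigmoid (c * (a - x)) * (c * -1)) / c) x :=
    ((hasDerivAt_softplus _).comp x (((hasDerivAt_id' x).const_sub a).const_mul c)).neg.div_const c
  convert h using 1
  field_simp

lemma tendsto_softplus_mul_sub_atTop (hc : 0 < c) :
    Tendsto (fun y => -softplus (c * (a - y)) / c) atTop (𝓝 0) := by
  have h : Tendsto (fun y => c * (a - y)) atTop atBot :=
    (tendsto_atBot_add_const_left _ a tendsto_neg_atTop_atBot).const_mul_atBot hc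
  simpa using (tendsto_softplus_atBot.comp h).neg.div_const c

lemma integrableOn_Ioi_sigmoid_mul_sub (hc : 0 < c) :
    IntegrableOn (fun x => sigmoid (c * (a - x))) (Ioi b) :=
  integrableOn_Ioi_deriv_of_nonneg' (fun x _ => hasDerivAt_softplus_mul_sub a hc x)
    (fun _ _ => sigmoid_nonneg _) (tendsto_softplus_mul_sub_atTop a hc)

lemma integral_Ioi_sigmoid_mul_sub (hc : 0 < c) :
    ∫ x in Ioi b, sigmoid (c * (a - x)) = softplus (c * (a - b)) / c := by
  rw [integral_Ioi_of_hasDerivAt_of_nonneg' (fun x _ => hasDerivAt_softplus_mul_sub a hc x)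
    (fun _ _ => sigmoid_nonneg _) (tendsto_softplus_mul_sub_atTop a hc)]
  ring

lemma integrableOn_Iio_sigmoid_mul_sub (hc : 0 < c) :
    IntegrableOn (fun x => sigmoid (c * (x - a))) (Iio b) := by
  have h := (integrableOn_Ioi_sigmoid_mul_sub (-a) (-b) hc).comp_neg_Iio
  simpa [sub_eq_add_neg, add_comm] using h

lemma integral_Iio_sigmoid_mul_sub (hc : 0 < c) :
    ∫ x in Iio b, sigmoid (c * (x - a)) = softplus (c * (b - a)) / c := by
  have h := integral_comp_neg_Ioi (-b) (fun y => sigmoid (c * (y - a)))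
  rw [neg_neg, integral_Iic_eq_integral_Iio] at h
  rw [← h]
  convert integral_Ioi_sigmoid_mul_sub (-a) (-b) hc using 3 <;> ring_nf

end LogisticTails

/-- for the normal uncertainty distribution `Φ` with parameters
`e` and `σ > 0`, the tail functions are integrable and
`∫₀^∞ (1 − Φ(x)) dx − ∫_{−∞}^0 Φ(x) dx = e`. -/
theorem normal_uncertainty_expected_value
    (e σ : ℝ) (hσ : 0 < σ) (Φ : ℝ → ℝ)
    (hΦ : ∀ x : ℝ, Φ x = (1 + Real.exp (π * (e - x) / (Real.sqrt 3 * σ)))⁻¹) :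
    IntegrableOn (fun x => 1 - Φ x) (Ioi (0 : ℝ)) ∧
    IntegrableOn Φ (Iio (0 : ℝ)) ∧
    (∫ x in Ioi (0 : ℝ), (1 - Φ x)) - (∫ x in Iio (0 : ℝ), Φ x) = e := by
  set c := π / (√3 * σ)
  have hc : 0 < c := by positivity
  have hΦ_sigmoid : Φ = fun x => sigmoid (c * (x - e)) := by
    funext x
    rw [hΦ, sigmoid_def]
    congr 3
    ring
  have h_upper : (fun x => 1 - Φ x) = fun x => sigmoid (c * (e - x)) := by
    funext x
    rw [hΦ_sigmoid, ← sigmoid_neg, ← mul_neg, neg_sub]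
  rw [h_upper, hΦ_sigmoid]
  refine ⟨integrableOn_Ioi_sigmoid_mul_sub e 0 hc, integrableOn_Iio_sigmoid_mul_sub e 0 hc, ?_⟩
  rw [integral_Ioi_sigmoid_mul_sub e 0 hc, integral_Iio_sigmoid_mul_sub e 0 hc, ← sub_div,
    sub_zero, zero_sub, mul_neg, softplus_sub_softplus_neg, mul_div_cancel_left₀ e hc.ne']
end

section
/- Let N, M, k, J, V > 0, μ ∈ ℝ, τ > 0 and σ > 0, and set c = σ√3 τ/π. The function α ↦ max(k·V·exp(μτ + c·ln(α/(1−α))) − N·J, 0) is Lebesgue integrable on (0,1) if and only if c < 1. -/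
open Real Set MeasureTheory

/-! On `(0,1)` the integrand is the positive part of `A (α/(1-α))^c - N J` with
`A = k V e^{μτ} > 0`, and over a set of finite measure such a positive part is integrable
exactly when the nonnegative function `(α/(1-α))^c` is. Writing
`(α/(1-α))^c = α^c (1-α)^{-c}`, the factor `α^c` lies between `(1/2)^c` and `1` on `(1/2,1)`,
so the integrand is integrable iff `(1-α)^{-c}` is integrable near `1`, i.e. iff `c < 1`. -/

theorem integrableOn_Ioo_one_sub_rpow_iff {s t : ℝ} (ht : t < 1) :
    IntegrableOn (fun x : ℝ => (1 - x) ^ s) (Ioo t 1) ↔ -1 < s := by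
  have hpre := (Measure.measurePreserving_sub_left volume (1 : ℝ)).integrableOn_comp_preimage
    (measurableEmbedding_subLeft 1) (f := fun x : ℝ => x ^ s) (s := Ioo 0 (1 - t))
  rw [preimage_const_sub_Ioo, sub_sub_cancel, sub_zero] at hpre
  exact hpre.trans (intervalIntegral.integrableOn_Ioo_rpow_iff (sub_pos.2 ht))

theorem div_one_sub_rpow_eq {x : ℝ} (hx₀ : 0 ≤ x) (hx₁ : x < 1) (c : ℝ) :
    (x / (1 - x)) ^ c = x ^ c * (1 - x) ^ (-c) := by
  rw [div_rpow hx₀ (sub_pos.2 hx₁).le, rpow_neg (sub_pos.2 hx₁).le, div_eq_mul_inv]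

theorem integrableOn_Ioo_div_one_sub_rpow_iff {c : ℝ} (hc : 0 ≤ c) :
    IntegrableOn (fun x : ℝ => (x / (1 - x)) ^ c) (Ioo 0 1) ↔ c < 1 := by
  constructor
  · intro hf
    have hhalf : 0 < (1 / 2 : ℝ) ^ c := by positivity
    have hbound : IntegrableOn (fun x : ℝ => (1 - x) ^ (-c)) (Ioo (1 / 2) 1) := by
      have hf' := hf.mono_set (Ioo_subset_Ioo_left (by norm_num : (0 : ℝ) ≤ 1 / 2))
      refine (hf'.const_mul ((1 / 2 : ℝ) ^ c)⁻¹).mono'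
        (by fun_prop : Measurable fun x : ℝ => (1 - x) ^ (-c)).aestronglyMeasurable ?_
      filter_upwards [ae_restrict_mem measurableSet_Ioo] with x ⟨hx₀, hx₁⟩
      have h1x : 0 < 1 - x := sub_pos.2 hx₁
      rw [norm_of_nonneg (by positivity), le_inv_mul_iff₀ hhalf,
        div_one_sub_rpow_eq (by linarith) hx₁]
      gcongr
    have := (integrableOn_Ioo_one_sub_rpow_iff (by norm_num)).1 hbound
    linarith
  · intro hc1
    refine ((integrableOn_Ioo_one_sub_rpow_iff (s := -c) zero_lt_one).2 (by linarith)).mono'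
      (by fun_prop : Measurable fun x : ℝ => (x / (1 - x)) ^ c).aestronglyMeasurable ?_
    filter_upwards [ae_restrict_mem measurableSet_Ioo] with x ⟨hx₀, hx₁⟩
    have h1x : 0 < 1 - x := sub_pos.2 hx₁
    rw [norm_of_nonneg (by positivity), div_one_sub_rpow_eq hx₀.le hx₁]
    exact mul_le_of_le_one_left (by positivity) (rpow_le_one hx₀.le hx₁.le hc)

theorem integrable_max_mul_sub_const_zero_iff {α : Type*} [MeasurableSpace α] {μ : Measure α}
    [IsFiniteMeasure μ] {g : α → ℝ} (hg : AEStronglyMeasurable g μ) (hg₀ : 0 ≤ᵐ[μ] g)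
    {A : ℝ} (hA : 0 < A) (K : ℝ) :
    Integrable (fun x => max (A * g x - K) 0) μ ↔ Integrable g μ := by
  refine ⟨fun h => ?_, fun h => ((h.const_mul A).sub (integrable_const K)).pos_part⟩
  refine ((h.add (integrable_const K)).const_mul A⁻¹).mono' hg ?_
  filter_upwards [hg₀] with x hx
  rw [Pi.add_apply, norm_of_nonneg hx, le_inv_mul_iff₀ hA]
  linarith [le_max_left (A * g x - K) 0]

theorem exp_add_mul_log_eq_mul_rpow {x : ℝ} (hx : 0 < x) (a c : ℝ) :
    exp (a + c * log x) = exp a * x ^ c := by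
  rw [exp_add, rpow_def_of_pos hx, mul_comm c]

theorem warrant_integrand_integrable_iff_general
    (N k J V μ τ σ : ℝ)
    (hk : 0 < k) (hV : 0 < V)
    (hτ : 0 < τ) (hσ : 0 < σ)
    (c : ℝ) (hc : c = σ * Real.sqrt 3 * τ / π) :
    IntegrableOn
      (fun α : ℝ => max (k * V * Real.exp (μ * τ + c * Real.log (α / (1 - α))) - N * J) 0)
      (Ioo (0 : ℝ) 1) ↔ c < 1 := by
  have hc₀ : 0 ≤ c := by rw [hc]; positivity
  have hA : 0 < k * V * exp (μ * τ) := by positivity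
  have hrpow : EqOn
      (fun α : ℝ => max (k * V * exp (μ * τ + c * log (α / (1 - α))) - N * J) 0)
      (fun α => max (k * V * exp (μ * τ) * (α / (1 - α)) ^ c - N * J) 0) (Ioo 0 1) :=
    fun α ⟨h₀, h₁⟩ => by
      dsimp only
      rw [exp_add_mul_log_eq_mul_rpow (div_pos h₀ (sub_pos.2 h₁)), ← mul_assoc]
  rw [integrableOn_congr_fun hrpow measurableSet_Ioo, IntegrableOn,
    integrable_max_mul_sub_const_zero_iff
      (by fun_prop : Measurable fun α : ℝ => (α / (1 - α)) ^ c).aestronglyMeasurable ?_ hA,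
    ← IntegrableOn, integrableOn_Ioo_div_one_sub_rpow_iff hc₀]
  filter_upwards [ae_restrict_mem measurableSet_Ioo] with α ⟨h₀, h₁⟩
  exact rpow_nonneg (div_pos h₀ (sub_pos.2 h₁)).le c

/-- the warrant payoff integrand is Lebesgue integrable on `(0,1)`
if and only if `c = σ√3 τ/π < 1`. -/
theorem warrant_integrand_integrable_iff
    (N M k J V μ τ σ : ℝ)
    (hN : 0 < N) (hM : 0 < M) (hk : 0 < k) (hJ : 0 < J) (hV : 0 < V)
    (hτ : 0 < τ) (hσ : 0 < σ)
    (c : ℝ) (hc : c = σ * Real.sqrt 3 * τ / π) :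
    IntegrableOn
      (fun α : ℝ => max (k * V * Real.exp (μ * τ + c * Real.log (α / (1 - α))) - N * J) 0)
      (Ioo (0 : ℝ) 1) ↔ c < 1 :=
  warrant_integrand_integrable_iff_general N k J V μ τ σ hk hV hτ hσ c hc
end

section
/- Let N, M, k, J, r > 0, μ ∈ ℝ, τ > 0 and V > 0, and for σ ∈ (0, π/(√3 τ)) define f_w(σ, V) = (e^{−rτ}/(N + M k)) ∫₀¹ max(k·V·exp(μτ + (σ√3 τ/π)·ln(α/(1−α))) − N·J, 0) dα. Then σ ↦ f_w(σ, V) is monotone nondecreasing on (0, π/(√3 τ)): if 0 < σ₁ ≤ σ₂ < π/(√3 τ), then f_w(σ₁, V) ≤ f_w(σ₂, V). -/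
/-!
With `logit α = log (α / (1 - α))` and `c = σ √3 τ / π` the integrand is
`g_c(α) = max (A e^{c logit α} - B) 0`. Since `logit (1 - α) = -logit α`, the substitution
`α ↦ 1 - α` gives `∫ g_c = ∫ g_{-c}`, so `∫ g_c = ½ ∫ (g_c + g_{-c})`. For fixed `α` the map
`c ↦ g_c(α) + g_{-c}(α)` is even and convex (`s ↦ max (A e^s - B) 0` is convex), hence
nondecreasing in `|c|`; integrating gives monotonicity. Integrability for `0 ≤ c < 1` comes from
`e^{c logit α} ≤ (1 - α)^{-c}`.
-/

open Real Set MeasureTheory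

noncomputable def logit (α : ℝ) : ℝ := log (α / (1 - α))

noncomputable def logitPayoff (A B c α : ℝ) : ℝ := max (A * exp (c * logit α) - B) 0

lemma logit_one_sub (α : ℝ) : logit (1 - α) = -logit α := by
  rw [logit, logit, sub_sub_cancel, ← inv_div, log_inv]

lemma logitPayoff_neg (A B c α : ℝ) : logitPayoff A B (-c) α = logitPayoff A B c (1 - α) := by
  rw [logitPayoff, logitPayoff, logit_one_sub, neg_mul, mul_neg]

lemma measurable_logitPayoff (A B c : ℝ) : Measurable (logitPayoff A B c) := by
  unfold logitPayoff logit
  fun_prop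

lemma exp_mul_logit_le {c α : ℝ} (hc : 0 ≤ c) (hα : α ∈ Ioo (0 : ℝ) 1) :
    exp (c * logit α) ≤ (1 - α) ^ (-c) := by
  obtain ⟨h₀, h₁⟩ := hα
  have h₁' : 0 < 1 - α := by linarith
  rw [logit, mul_comm, ← rpow_def_of_pos (div_pos h₀ h₁'), rpow_neg h₁'.le, ← inv_rpow h₁'.le,
    ← one_div]
  gcongr

lemma integrableOn_logitPayoff (A B : ℝ) {c : ℝ} (hc₀ : 0 ≤ c) (hc₁ : c < 1) :
    IntegrableOn (logitPayoff A B c) (Ioo 0 1) := by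
  have hdom : IntegrableOn (fun α : ℝ => |A| * (1 - α) ^ (-c) + |B|) (Ioo 0 1) := by
    have : IntervalIntegrable (fun α : ℝ => (1 - α) ^ (-c)) volume 0 1 := by
      simpa using (intervalIntegral.intervalIntegrable_rpow' (a := 0) (b := 1)
        (by linarith : -1 < -c)).comp_sub_left 1 |>.symm
    exact (((intervalIntegrable_iff_integrableOn_Ioo_of_le zero_le_one).1 this).const_mul _).add
      (integrableOn_const (by simp))
  refine hdom.mono' (measurable_logitPayoff A B c).aestronglyMeasurable ?_
  rw [ae_restrict_iff' measurableSet_Ioo]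
  filter_upwards with α hα
  have hexp := exp_mul_logit_le hc₀ hα
  have hA : A * exp (c * logit α) ≤ |A| * (1 - α) ^ (-c) :=
    (le_abs_self _).trans (by rw [abs_mul, abs_of_pos (exp_pos _)]; gcongr)
  rw [logitPayoff, norm_of_nonneg (le_max_right _ _)]
  refine max_le ?_
    (add_nonneg (mul_nonneg (abs_nonneg A) ((exp_pos _).le.trans hexp)) (abs_nonneg B))
  linarith [neg_abs_le B]

lemma intervalIntegrable_logitPayoff (A B : ℝ) {c : ℝ} (hc₀ : 0 ≤ c) (hc₁ : c < 1) :
    IntervalIntegrable (logitPayoff A B c) volume 0 1 :=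
  (intervalIntegrable_iff_integrableOn_Ioo_of_le zero_le_one).2
    (integrableOn_logitPayoff A B hc₀ hc₁)

lemma intervalIntegrable_logitPayoff_neg (A B : ℝ) {c : ℝ} (hc₀ : 0 ≤ c) (hc₁ : c < 1) :
    IntervalIntegrable (logitPayoff A B (-c)) volume 0 1 := by
  rw [show logitPayoff A B (-c) = fun α => logitPayoff A B c (1 - α) from
    funext (logitPayoff_neg A B c)]
  simpa using ((intervalIntegrable_logitPayoff A B hc₀ hc₁).comp_sub_left 1).symm

lemma integral_logitPayoff_neg (A B c : ℝ) :
    ∫ α in (0)..1, logitPayoff A B (-c) α = ∫ α in (0)..1, logitPayoff A B c α := by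
  simp_rw [logitPayoff_neg]
  simp [intervalIntegral.integral_comp_sub_left (logitPayoff A B c) (a := 0) (b := 1) 1]

lemma convexOn_max_mul_exp_sub {A : ℝ} (hA : 0 ≤ A) (B : ℝ) :
    ConvexOn ℝ univ fun s => max (A * exp s - B) 0 :=
  ((convexOn_exp.smul hA).add_const (-B)).sup (convexOn_const 0 convex_univ)

/-- `s ↦ f s + f (-s)` is convex and even, so it is nondecreasing in `|s|`. -/
lemma ConvexOn.add_comp_neg_le {f : ℝ → ℝ} (hf : ConvexOn ℝ univ f) {a b : ℝ}
    (hab : |a| ≤ |b|) : f a + f (-a) ≤ f b + f (-b) := by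
  have heven : ConvexOn ℝ univ fun s => f s + f (-s) :=
    hf.add (hf.comp_linearMap (-LinearMap.id))
  have hseg : a ∈ segment ℝ (-|b|) |b| := by
    rw [segment_eq_Icc (by linarith [abs_nonneg b])]
    exact abs_le.mp hab
  have := heven.le_on_segment (mem_univ _) (mem_univ _) hseg
  rcases abs_choice b with h | h <;> simp only [h, neg_neg, add_comm, max_self] at this ⊢ <;>
    linarith

lemma logitPayoff_add_neg_le {A : ℝ} (hA : 0 ≤ A) (B : ℝ) {c₁ c₂ : ℝ} (hc : |c₁| ≤ |c₂|)
    (α : ℝ) :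
    logitPayoff A B c₁ α + logitPayoff A B (-c₁) α ≤
      logitPayoff A B c₂ α + logitPayoff A B (-c₂) α := by
  simpa only [logitPayoff, neg_mul] using (convexOn_max_mul_exp_sub hA B).add_comp_neg_le
    (a := c₁ * logit α) (b := c₂ * logit α) (by rw [abs_mul, abs_mul]; gcongr)

lemma integral_logitPayoff_mono {A : ℝ} (hA : 0 ≤ A) (B : ℝ) {c₁ c₂ : ℝ} (hc₁ : 0 ≤ c₁)
    (hc₁₂ : c₁ ≤ c₂) (hc₂ : c₂ < 1) :
    ∫ α in (0)..1, logitPayoff A B c₁ α ≤ ∫ α in (0)..1, logitPayoff A B c₂ α := by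
  have hsum : ∀ c, 0 ≤ c → c < 1 →
      ∫ α in (0)..1, (logitPayoff A B c α + logitPayoff A B (-c) α) =
        2 * ∫ α in (0)..1, logitPayoff A B c α := fun c h₀ h₁ => by
    rw [intervalIntegral.integral_add (intervalIntegrable_logitPayoff A B h₀ h₁)
      (intervalIntegrable_logitPayoff_neg A B h₀ h₁), integral_logitPayoff_neg, two_mul]
  have hsym := intervalIntegral.integral_mono_on zero_le_one
    ((intervalIntegrable_logitPayoff A B hc₁ (hc₁₂.trans_lt hc₂)).add
      (intervalIntegrable_logitPayoff_neg A B hc₁ (hc₁₂.trans_lt hc₂)))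
    ((intervalIntegrable_logitPayoff A B (hc₁.trans hc₁₂) hc₂).add
      (intervalIntegrable_logitPayoff_neg A B (hc₁.trans hc₁₂) hc₂))
    fun α _ => logitPayoff_add_neg_le hA B (abs_le_abs_of_nonneg hc₁ hc₁₂) α
  rw [hsum c₁ hc₁ (hc₁₂.trans_lt hc₂), hsum c₂ (hc₁.trans hc₁₂) hc₂] at hsym
  linarith

theorem warrant_price_monotone_in_sigma_general
    (N M k J r μ τ V : ℝ)
    (hN : 0 < N) (hM : 0 < M) (hk : 0 < k)
    (hτ : 0 < τ) (hV : 0 < V)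
    (f_w : ℝ → ℝ)
    (hf : ∀ σ : ℝ, f_w σ = (Real.exp (-r * τ) / (N + M * k)) *
      ∫ α in Ioo (0 : ℝ) 1,
        max (k * V * Real.exp (μ * τ + (σ * Real.sqrt 3 * τ / π) * Real.log (α / (1 - α)))
          - N * J) 0)
    (σ₁ σ₂ : ℝ) (h₁ : 0 < σ₁) (h₁₂ : σ₁ ≤ σ₂) (h₂ : σ₂ < π / (Real.sqrt 3 * τ)) :
    f_w σ₁ ≤ f_w σ₂ := by
  have hf' : ∀ σ, f_w σ = (exp (-r * τ) / (N + M * k)) *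
      ∫ α in (0)..1, logitPayoff (k * V * exp (μ * τ)) (N * J) (σ * √3 * τ / π) α := by
    intro σ
    rw [hf, intervalIntegral.integral_of_le zero_le_one, integral_Ioc_eq_integral_Ioo]
    simp only [logitPayoff, logit, exp_add, mul_assoc]
  have hc₂ : σ₂ * √3 * τ / π < 1 := by
    rw [div_lt_one pi_pos, mul_assoc]
    exact (lt_div_iff₀ (by positivity)).1 h₂
  rw [hf', hf']
  gcongr
  exact integral_logitPayoff_mono (by positivity) _ (by positivity) (by gcongr) hc₂

/-- the equity warrant price `f_w(σ, V)` is monotone nondecreasing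
in the volatility `σ` on `(0, π/(√3 τ))`. -/
theorem warrant_price_monotone_in_sigma
    (N M k J r μ τ V : ℝ)
    (hN : 0 < N) (hM : 0 < M) (hk : 0 < k) (hJ : 0 < J) (hr : 0 < r)
    (hτ : 0 < τ) (hV : 0 < V)
    (f_w : ℝ → ℝ)
    (hf : ∀ σ : ℝ, f_w σ = (Real.exp (-r * τ) / (N + M * k)) *
      ∫ α in Ioo (0 : ℝ) 1,
        max (k * V * Real.exp (μ * τ + (σ * Real.sqrt 3 * τ / π) * Real.log (α / (1 - α)))
          - N * J) 0)
    (σ₁ σ₂ : ℝ) (h₁ : 0 < σ₁) (h₁₂ : σ₁ ≤ σ₂) (h₂ : σ₂ < π / (Real.sqrt 3 * τ)) :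
    f_w σ₁ ≤ f_w σ₂ :=
  warrant_price_monotone_in_sigma_general N M k J r μ τ V hN hM hk hτ hV f_w hf σ₁ σ₂ h₁ h₁₂ h₂
end

section
/- Let N, M, k, J, r > 0, μ ∈ ℝ, τ > 0 and σ ∈ (0, π/(√3 τ)), and for V > 0 define f_w(σ, V) = (e^{−rτ}/(N + M k)) ∫₀¹ max(k·V·exp(μτ + (σ√3 τ/π)·ln(α/(1−α))) − N·J, 0) dα. Then f_w(σ, V) → +∞ as V → +∞. -/
/-!
Write `c = σ√3τ/π ∈ (0, 1)`. The integrand is `max (k V g(α) - N J) 0` with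
`g(α) = e^{μτ} (α/(1-α))^c ≤ e^{μτ} (1-α)^{-c}`, which is integrable on `(0, 1)` because `c < 1`.
Dropping the `max` bounds the integral below by `k V ∫ g - N J`, and `∫ g > 0`, so the price grows
at least linearly in `V`.
-/

open Real Set MeasureTheory Filter Topology

theorem tendsto_integral_max_mul_sub_atTop {X : Type*} [MeasurableSpace X] {μ : Measure X}
    [IsFiniteMeasure μ] {g : X → ℝ} (hg : Integrable g μ) (hpos : 0 < ∫ x, g x ∂μ) (b : ℝ) :
    Tendsto (fun W => ∫ x, max (W * g x - b) 0 ∂μ) atTop atTop := by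
  have hlin : Tendsto (fun W => W * ∫ x, g x ∂μ - μ.real univ * b) atTop atTop :=
    tendsto_atTop_add_const_right _ _ (tendsto_id.atTop_mul_const hpos)
  refine tendsto_atTop_mono (fun W => ?_) hlin
  have hint : Integrable (fun x => W * g x - b) μ := (hg.const_mul W).sub (integrable_const b)
  calc W * ∫ x, g x ∂μ - μ.real univ * b = ∫ x, (W * g x - b) ∂μ := by
        rw [integral_sub (hg.const_mul W) (integrable_const b), integral_const_mul,
          integral_const, smul_eq_mul]
    _ ≤ ∫ x, max (W * g x - b) 0 ∂μ :=
        integral_mono hint hint.pos_part fun x => le_max_left _ _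

theorem integrableOn_exp_add_mul_log_div_one_sub (m : ℝ) {c : ℝ} (hc0 : 0 ≤ c) (hc1 : c < 1) :
    IntegrableOn (fun α => exp (m + c * log (α / (1 - α)))) (Ioo 0 1) := by
  have hdom : IntegrableOn (fun α : ℝ => exp m * (1 - α) ^ (-c)) (Ioo 0 1) := by
    have h := (intervalIntegral.intervalIntegrable_rpow' (a := 0) (b := 1)
      (by linarith : -1 < -c)).comp_sub_left 1
    simp only [sub_zero, sub_self] at h
    exact ((intervalIntegrable_iff_integrableOn_Ioo_of_le zero_le_one).mp h.symm).const_mul _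
  refine hdom.mono' (Measurable.aestronglyMeasurable (by fun_prop))
    ((ae_restrict_iff' measurableSet_Ioo).mpr (ae_of_all _ fun α ⟨hα0, hα1⟩ => ?_))
  have h1α : 0 < 1 - α := by linarith
  rw [norm_of_nonneg (exp_pos _).le, exp_add, mul_comm c, ← rpow_def_of_pos (div_pos hα0 h1α),
    div_rpow hα0.le h1α.le, rpow_neg h1α.le, div_eq_mul_inv]
  gcongr
  exact mul_le_of_le_one_left (by positivity) (rpow_le_one hα0.le hα1.le hc0)

theorem warrant_price_tendsto_atTop_general
    (N M k J r μ τ σ : ℝ)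
    (hN : 0 < N) (hM : 0 < M) (hk : 0 < k)
    (hτ : 0 < τ) (hσ : σ ∈ Ioo 0 (π / (Real.sqrt 3 * τ)))
    (f_w : ℝ → ℝ)
    (hf : ∀ V : ℝ, f_w V = (Real.exp (-r * τ) / (N + M * k)) *
      ∫ α in Ioo (0 : ℝ) 1,
        max (k * V * Real.exp (μ * τ + (σ * Real.sqrt 3 * τ / π) * Real.log (α / (1 - α)))
          - N * J) 0) :
    Tendsto f_w atTop atTop := by
  have hs3τ : 0 < √3 * τ := by positivity
  have hc0 : 0 ≤ σ * √3 * τ / π := by have := hσ.1; positivity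
  have hc1 : σ * √3 * τ / π < 1 := by
    rw [div_lt_one pi_pos, mul_assoc]
    exact (lt_div_iff₀ hs3τ).mp hσ.2
  have hg := integrableOn_exp_add_mul_log_div_one_sub (μ * τ) hc0 hc1
  have : NeZero (volume.restrict (Ioo (0 : ℝ) 1)) := ⟨by simp⟩
  have hG := tendsto_integral_max_mul_sub_atTop hg (integral_exp_pos hg) (N * J)
  have hC : 0 < exp (-r * τ) / (N + M * k) := by positivity
  rw [funext hf]
  exact (hG.comp (tendsto_id.const_mul_atTop hk)).const_mul_atTop hC

/-- the equity warrant price `f_w(σ, V)` tends to `+∞` as `V → +∞`. -/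
theorem warrant_price_tendsto_atTop
    (N M k J r μ τ σ : ℝ)
    (hN : 0 < N) (hM : 0 < M) (hk : 0 < k) (hJ : 0 < J) (hr : 0 < r)
    (hτ : 0 < τ) (hσ : σ ∈ Ioo 0 (π / (Real.sqrt 3 * τ)))
    (f_w : ℝ → ℝ)
    (hf : ∀ V : ℝ, f_w V = (Real.exp (-r * τ) / (N + M * k)) *
      ∫ α in Ioo (0 : ℝ) 1,
        max (k * V * Real.exp (μ * τ + (σ * Real.sqrt 3 * τ / π) * Real.log (α / (1 - α)))
          - N * J) 0) :
    Tendsto f_w atTop atTop :=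
  warrant_price_tendsto_atTop_general N M k J r μ τ σ hN hM hk hτ hσ f_w hf
end
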